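/- arXiv:2603.14573 — 2 statements merged into one kernel-verified Lean document; each statement's English description precedes it below -/
import Mathlib

section
/- Let G(P) be the bipartite graph associated to a multiset P of field and disorder variables, and suppose vertex i ∈ [N] is not all-reaching in P (i.e. either i ∉ V(P) or G(P) is disconnected, with |P| > 0). If X_{ij} ∈ P, then the vertex j is not all-reaching in the multiset P \ {X_{ij}}. -/
/-- The variables appearing in derivative multisets: fields `b*_i`, `b^s_i`, `h^s_j`,
and disorder entries `X_{ij}`. -/
inductive GVar (N d : ℕ) : Type
  | bstar (i : Fin N) : GVar N d
  | b (s : ℕ) (i : Fin N) : GVar N d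
  | h (s : ℕ) (j : Fin d) : GVar N d
  | X (i : Fin N) (j : Fin d) : GVar N d
  deriving DecidableEq

namespace GVar

variable {N d : ℕ}

/-- Vertices of the bipartite graph `G(P)`: `Sum.inl j` for `j ∈ [d]`, `Sum.inr i`
for `i ∈ [N]`. -/
def inV (P : Multiset (GVar N d)) : Fin d ⊕ Fin N → Prop
  | Sum.inl j => (∃ s, GVar.h s j ∈ P) ∨ (∃ i, GVar.X i j ∈ P)
  | Sum.inr i => (GVar.bstar i ∈ P) ∨ (∃ s, GVar.b s i ∈ P) ∨ (∃ j, GVar.X i j ∈ P)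

/-- Adjacency in `G(P)`: one edge `{i, j}` for each `X_{ij} ∈ P`. -/
def adj (P : Multiset (GVar N d)) : (Fin d ⊕ Fin N) → (Fin d ⊕ Fin N) → Prop
  | Sum.inl j, Sum.inr i => GVar.X i j ∈ P
  | Sum.inr i, Sum.inl j => GVar.X i j ∈ P
  | _, _ => False

/-- A vertex `k` is all-reaching in `P` if `|P| = 0`, or `k ∈ V(P)` and `G(P)` is
connected (every two vertices of `V(P)` are joined by a path of edges of `G(P)`). -/
def allReaching (P : Multiset (GVar N d)) (k : Fin d ⊕ Fin N) : Prop :=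
  P = 0 ∨ (inV P k ∧ ∀ u v, inV P u → inV P v → Relation.ReflTransGen (adj P) u v)

end GVar

/-- if the vertex `i ∈ [N]` is not all-reaching in `P` and `X_{ij} ∈ P`,
then `j` is not all-reaching in `P \ {X_{ij}}`. -/
theorem stmt10 {N d : ℕ} (P : Multiset (GVar N d)) (i : Fin N) (j : Fin d)
    (hX : GVar.X i j ∈ P)
    (hi : ¬ GVar.allReaching P (Sum.inr i)) :
    ¬ GVar.allReaching (P.erase (GVar.X i j)) (Sum.inl j) := by
  intro hj
  apply hi
  right
  set P' := P.erase (GVar.X i j) with hP'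
  have hsub : ∀ a : GVar N d, a ∈ P' → a ∈ P := fun a ha => Multiset.mem_of_mem_erase ha
  have hmono : ∀ u v, GVar.adj P' u v → GVar.adj P u v := by
    intro u v h
    cases u <;> cases v <;> simp only [GVar.adj] at * <;> exact hsub _ h
  have hsymm : Symmetric (GVar.adj P) := by
    intro u v h
    cases u <;> cases v <;> simp only [GVar.adj] at * <;> exact h
  have hcase : ∀ u, GVar.inV P u → GVar.inV P' u ∨ u = Sum.inl j ∨ u = Sum.inr i := by
    intro u hu
    cases u with
    | inl j' =>
      rcases hu with ⟨s, hs⟩ | ⟨i', hi'⟩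
      · exact Or.inl (Or.inl ⟨s, (Multiset.mem_erase_of_ne (by simp)).mpr hs⟩)
      · by_cases h : GVar.X i' j' = GVar.X i j
        · obtain ⟨rfl, rfl⟩ : i' = i ∧ j' = j := by injection h with h1 h2; exact ⟨h1, h2⟩
          exact Or.inr (Or.inl rfl)
        · exact Or.inl (Or.inr ⟨i', (Multiset.mem_erase_of_ne h).mpr hi'⟩)
    | inr i' =>
      rcases hu with hb | ⟨s, hs⟩ | ⟨j', hj'⟩
      · exact Or.inl (Or.inl ((Multiset.mem_erase_of_ne (by simp)).mpr hb))
      · exact Or.inl (Or.inr (Or.inl ⟨s, (Multiset.mem_erase_of_ne (by simp)).mpr hs⟩))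
      · by_cases h : GVar.X i' j' = GVar.X i j
        · obtain ⟨rfl, rfl⟩ : i' = i ∧ j' = j := by injection h with h1 h2; exact ⟨h1, h2⟩
          exact Or.inr (Or.inr rfl)
        · exact Or.inl (Or.inr (Or.inr ⟨j', (Multiset.mem_erase_of_ne h).mpr hj'⟩))
  have key : ∀ u, GVar.inV P u → Relation.ReflTransGen (GVar.adj P) u (Sum.inl j) := by
    intro u hu
    rcases hcase u hu with huV | rfl | rfl
    · rcases hj with hzero | ⟨hjV, hconn⟩
      · exfalso
        rw [hzero] at huV
        cases u <;> simp [GVar.inV] at huV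
      · exact Relation.ReflTransGen.mono hmono _ _ (hconn u (Sum.inl j) huV hjV)
    · exact Relation.ReflTransGen.refl
    · exact Relation.ReflTransGen.single hX
  refine ⟨Or.inr (Or.inr ⟨j, hX⟩), fun u v hu hv => ?_⟩
  exact (key u hu).trans (((@Relation.ReflTransGen.symmetric _ _ ⟨fun _ _ h => hsymm h⟩).symm _ _) (key v hv))
end

section
/- Fix p ≥ 1 and q ≤ p with p − q even and nonnegative. Sample a uniformly random tuple (j_1,…,j_p) from A_q ⊂ [d]^p, the set of tuples in which exactly q indices appear exactly once. Let B ⊂ [d] be a fixed set of size O(1), let u' be the number of unique indices lying in B and u − u' the number of positions among the non-unique part lying in B. Then E[N^{u'} · N^{(u−u')/2}] ≤ C for a constant C independent of N, when d = αN. -/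
/-- The set of values appearing exactly once in the tuple `t`. -/
def uniqueVals {p d : ℕ} (t : Fin p → Fin d) : Finset (Fin d) :=
  Finset.univ.filter (fun v => (Finset.univ.filter (fun i => t i = v)).card = 1)

/-- `A_q`: tuples in `[d]^p` in which exactly `q` values appear exactly once. -/
def tupleAq (p d q : ℕ) : Finset (Fin p → Fin d) :=
  Finset.univ.filter (fun t => (uniqueVals t).card = q)

/-- Number of positions of `t` whose value lies in `B`. -/
def uCount {p d : ℕ} (B : Finset (Fin d)) (t : Fin p → Fin d) : ℕ :=
  (Finset.univ.filter (fun i => t i ∈ B)).card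

/-- Number of positions of `t` whose value lies in `B` and is unique in `t`. -/
def uCount' {p d : ℕ} (B : Finset (Fin d)) (t : Fin p → Fin d) : ℕ :=
  (Finset.univ.filter (fun i => t i ∈ B ∧ t i ∈ uniqueVals t)).card

namespace Stmt11Aux

open Finset

variable {p d : ℕ}

/-- Representative of the fiber of `i` under `t`: the least index with the same value. -/
def rp (t : Fin p → Fin d) (i : Fin p) : Fin p :=
  (Finset.univ.filter fun j => t j = t i).min' ⟨i, by simp⟩

lemma t_rp (t : Fin p → Fin d) (i : Fin p) : t (rp t i) = t i := by
  have := Finset.min'_mem (Finset.univ.filter fun j => t j = t i) ⟨i, by simp⟩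
  simpa [rp] using this

lemma rp_congr {t : Fin p → Fin d} {i j : Fin p} (h : t i = t j) : rp t i = rp t j := by
  simp only [rp, h]

lemma rp_idem (t : Fin p → Fin d) (i : Fin p) : rp t (rp t i) = rp t i :=
  rp_congr (t_rp t i)

/-- Representatives of a kernel map `c`. -/
def Rc (c : Fin p → Fin p) : Finset (Fin p) := Finset.univ.filter fun i => c i = i

/-- Block of `i` under the kernel map `c`. -/
def blk (c : Fin p → Fin p) (i : Fin p) : Finset (Fin p) := Finset.univ.filter fun j => c j = c i

/-- Block size. -/
def sz (c : Fin p → Fin p) (i : Fin p) : ℕ := (blk c i).card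

lemma mem_blk_self (c : Fin p → Fin p) (i : Fin p) : i ∈ blk c i := by simp [blk]

lemma sz_pos (c : Fin p → Fin p) (i : Fin p) : 1 ≤ sz c i :=
  Finset.card_pos.2 ⟨i, mem_blk_self c i⟩

section fixedc

variable {t : Fin p → Fin d} {c : Fin p → Fin p} (ht : rp t = c)

include ht

lemma c_idem (i : Fin p) : c (c i) = c i := by
  rw [← ht]; exact rp_idem t i

lemma t_eq_iff (i j : Fin p) : t j = t i ↔ c j = c i := by
  constructor
  · intro h; rw [← ht]; exact rp_congr h
  · intro h
    have h1 : t (rp t j) = t j := t_rp t j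
    have h2 : t (rp t i) = t i := t_rp t i
    rw [ht] at h1 h2
    rw [← h1, ← h2, h]

lemma fiber_eq (i : Fin p) : (Finset.univ.filter fun j => t j = t i) = blk c i := by
  ext j
  simp only [Finset.mem_filter, Finset.mem_univ, true_and, blk]
  exact t_eq_iff ht i j

lemma sz_one_mem_Rc {i : Fin p} (h : sz c i = 1) : c i = i := by
  obtain ⟨a, ha⟩ := Finset.card_eq_one.1 h
  have hi : i ∈ blk c i := mem_blk_self c i
  have hci : c i ∈ blk c i := by simp [blk, c_idem ht i]
  rw [ha, Finset.mem_singleton] at hi hci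
  rw [hci, hi]

lemma t_injOn_Rc : Set.InjOn t (Rc c) := by
  intro i hi j hj hij
  simp only [Rc, Finset.coe_filter, Set.mem_setOf_eq, Finset.mem_univ, true_and] at hi hj
  have : c i = c j := (t_eq_iff ht j i).1 hij
  rwa [hi, hj] at this

lemma uniqueVals_eq : uniqueVals t = ((Rc c).filter fun i => sz c i = 1).image t := by
  ext v
  simp only [uniqueVals, Finset.mem_filter, Finset.mem_univ, true_and, Finset.mem_image]
  constructor
  · intro hcard
    obtain ⟨a, ha⟩ := Finset.card_eq_one.1 hcard
    have hav : a ∈ (Finset.univ.filter fun i => t i = v) := ha ▸ Finset.mem_singleton_self a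
    have htav : t a = v := by simpa using hav
    refine ⟨a, ?_, htav⟩
    have hfib : (Finset.univ.filter fun j => t j = t a) = {a} := by
      rw [← ha]; congr 1; ext j; simp [htav]
    have hsz : sz c a = 1 := by
      rw [sz, ← fiber_eq ht, hfib]; simp
    refine ⟨?_, hsz⟩
    simp only [Rc, Finset.mem_filter, Finset.mem_univ, true_and]
    exact sz_one_mem_Rc ht hsz
  · rintro ⟨a, ha, rfl⟩
    have ha2 : sz c a = 1 := ha.2
    have : (Finset.univ.filter fun i => t i = t a).card = 1 := by
      rw [fiber_eq ht]; exact ha2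
    exact this

lemma card_filter_sz_one (hA : (uniqueVals t).card = q') :
    ((Rc c).filter fun i => sz c i = 1).card = q' := by
  rw [uniqueVals_eq ht] at hA
  rw [← hA]
  exact (Finset.card_image_of_injOn ((t_injOn_Rc ht).mono (by
    intro x hx
    simp only [Finset.coe_filter] at hx
    exact hx.1))).symm


lemma sum_sz : ∑ i ∈ Rc c, sz c i = p := by
  have H : ∀ x ∈ (Finset.univ : Finset (Fin p)), c x ∈ Rc c := by
    intro x _; simp [Rc, c_idem ht x]
  have h := Finset.card_eq_sum_card_fiberwise H
  simp only [Finset.card_univ, Fintype.card_fin] at h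
  have h2 : ∑ i ∈ Rc c, sz c i = ∑ i ∈ Rc c, (Finset.univ.filter (fun a => c a = i)).card := by
    refine Finset.sum_congr rfl ?_
    intro i hi
    have hci : c i = i := by simpa [Rc] using hi
    rw [sz, blk]
    congr 1
    ext j
    simp [hci]
  rw [h2, ← h]

lemma uCount_eq (B : Finset (Fin d)) :
    uCount B t = ∑ i ∈ Rc c, if t i ∈ B then sz c i else 0 := by
  have H : ∀ x ∈ Finset.univ.filter (fun j => t j ∈ B), c x ∈ Rc c := by
    intro x _; simp [Rc, c_idem ht x]
  rw [uCount, Finset.card_eq_sum_card_fiberwise H]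
  refine Finset.sum_congr rfl ?_
  intro i hi
  have hci : c i = i := by simpa [Rc] using hi
  by_cases hB : t i ∈ B
  · rw [if_pos hB, sz, blk]
    congr 1
    ext j
    simp only [Finset.mem_filter, Finset.mem_univ, true_and]
    constructor
    · rintro ⟨-, h2⟩; rw [h2, hci]
    · intro hc
      have htj : t j = t i := (t_eq_iff ht i j).2 hc
      exact ⟨by rw [htj]; exact hB, by rw [hc, hci]⟩
  · rw [if_neg hB, Finset.card_eq_zero]
    ext j
    simp only [Finset.mem_filter, Finset.mem_univ, true_and, Finset.notMem_empty, iff_false,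
      not_and]
    intro hjB hcj
    have hci2 : c j = c i := by rw [hcj, hci]
    have htj : t j = t i := (t_eq_iff ht i j).2 hci2
    exact hB (by rw [← htj]; exact hjB)

lemma mem_uniqueVals_iff (i : Fin p) : t i ∈ uniqueVals t ↔ sz c i = 1 := by
  simp only [uniqueVals, Finset.mem_filter, Finset.mem_univ, true_and]
  rw [fiber_eq ht i]
  rfl

lemma uCount'_eq (B : Finset (Fin d)) :
    uCount' B t = ∑ i ∈ Rc c, if t i ∈ B ∧ sz c i = 1 then 1 else 0 := by
  have h1 : (Finset.univ.filter fun i => t i ∈ B ∧ t i ∈ uniqueVals t)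
      = (Rc c).filter (fun i => t i ∈ B ∧ sz c i = 1) := by
    ext i
    simp only [Finset.mem_filter, Finset.mem_univ, true_and, mem_uniqueVals_iff ht i]
    constructor
    · intro h
      refine ⟨?_, h⟩
      simp only [Rc, Finset.mem_filter, Finset.mem_univ, true_and]
      exact sz_one_mem_Rc ht h.2
    · exact fun h => h.2
  rw [uCount', h1, Finset.card_filter]

end fixedc

/-- The exponent attached to a block. -/
noncomputable def ex (c : Fin p → Fin p) (i : Fin p) : ℝ :=
  if sz c i = 1 then 1 else (sz c i : ℝ)/2

lemma one_le_ex (c : Fin p → Fin p) (i : Fin p) : 1 ≤ ex c i := by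
  rw [ex]
  split_ifs with h
  · exact le_refl 1
  · have h2 : 2 ≤ sz c i := by
      have := sz_pos c i
      omega
    have : (2 : ℝ) ≤ (sz c i : ℝ) := by exact_mod_cast h2
    linarith

section fixedc2

variable {t : Fin p → Fin d} {c : Fin p → Fin p} {q : ℕ} (ht : rp t = c)

include ht

lemma sum_ex (hA : (uniqueVals t).card = q) :
    ∑ i ∈ Rc c, ex c i = ((p : ℝ) + q)/2 := by
  have h1 : ∑ i ∈ Rc c, ex c i
      = ∑ i ∈ (Rc c).filter (fun i => sz c i = 1), ex c i
        + ∑ i ∈ (Rc c).filter (fun i => ¬ sz c i = 1), ex c i :=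
    (Finset.sum_filter_add_sum_filter_not _ _ _).symm
  have h2 : ∑ i ∈ (Rc c).filter (fun i => sz c i = 1), ex c i = (q : ℝ) := by
    have e1 : ∀ i ∈ (Rc c).filter (fun i => sz c i = 1), ex c i = 1 := by
      intro i hi
      have := (Finset.mem_filter.1 hi).2
      simp [ex, this]
    rw [Finset.sum_congr rfl e1, Finset.sum_const, card_filter_sz_one ht hA]
    simp
  have h3 : ∑ i ∈ (Rc c).filter (fun i => ¬ sz c i = 1), ex c i
      = (∑ i ∈ (Rc c).filter (fun i => ¬ sz c i = 1), (sz c i : ℝ))/2 := by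
    rw [Finset.sum_div]
    refine Finset.sum_congr rfl ?_
    intro i hi
    have := (Finset.mem_filter.1 hi).2
    simp [ex, this]
  have h4 : ∑ i ∈ (Rc c).filter (fun i => sz c i = 1), (sz c i : ℝ) = (q : ℝ) := by
    have e1 : ∀ i ∈ (Rc c).filter (fun i => sz c i = 1), (sz c i : ℝ) = 1 := by
      intro i hi
      have := (Finset.mem_filter.1 hi).2
      simp [this]
    rw [Finset.sum_congr rfl e1, Finset.sum_const, card_filter_sz_one ht hA]
    simp
  have h5 : (∑ i ∈ Rc c, (sz c i : ℝ)) = (p : ℝ) := by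
    rw [← Nat.cast_sum, sum_sz ht]
  have h6 := Finset.sum_filter_add_sum_filter_not (Rc c) (fun i => sz c i = 1)
    (fun i => (sz c i : ℝ))
  rw [h1, h2, h3]
  rw [h4, h5] at h6
  have h7 : ∑ i ∈ (Rc c).filter (fun i => ¬ sz c i = 1), (sz c i : ℝ) = (p : ℝ) - q := by
    linarith
  rw [h7]
  ring

end fixedc2

/-- Factor attached to a representative and a value. -/
noncomputable def FF {p d : ℕ} (N : ℕ) (B : Finset (Fin d)) (c : Fin p → Fin p)
    (i : Fin p) (v : Fin d) : ℝ :=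
  if v ∈ B then (N : ℝ) ^ (ex c i) else 1

lemma FF_nonneg {p d : ℕ} (N : ℕ) (B : Finset (Fin d)) (c : Fin p → Fin p)
    (i : Fin p) (v : Fin d) : 0 ≤ FF N B c i v := by
  rw [FF]
  split_ifs
  · positivity
  · norm_num

section weight

variable {t : Fin p → Fin d} {c : Fin p → Fin p} {N : ℕ} (ht : rp t = c) (hN : 1 ≤ N)

include ht hN

lemma weight_eq (B : Finset (Fin d)) :
    (N : ℝ) ^ (uCount' B t) *
      (N : ℝ) ^ ((((uCount B t : ℝ) - (uCount' B t : ℝ))) / 2)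
    = ∏ i ∈ Rc c, FF N B c i (t i) := by
  have hN0 : (0 : ℝ) < N := by
    have : (1 : ℝ) ≤ N := by exact_mod_cast hN
    linarith
  rw [← Real.rpow_natCast (N : ℝ) (uCount' B t), ← Real.rpow_add hN0]
  have hu : (uCount B t : ℝ) = ∑ i ∈ Rc c, (if t i ∈ B then (sz c i : ℝ) else 0) := by
    rw [uCount_eq ht B, Nat.cast_sum]
    refine Finset.sum_congr rfl ?_
    intro i _
    rw [apply_ite (Nat.cast : ℕ → ℝ)]
    norm_num
  have hu' : (uCount' B t : ℝ)
      = ∑ i ∈ Rc c, (if t i ∈ B ∧ sz c i = 1 then (1 : ℝ) else 0) := by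
    rw [uCount'_eq ht B, Nat.cast_sum]
    refine Finset.sum_congr rfl ?_
    intro i _
    rw [apply_ite (Nat.cast : ℕ → ℝ)]
    norm_num
  have hexp : (uCount' B t : ℝ) + ((uCount B t : ℝ) - (uCount' B t : ℝ)) / 2
      = ∑ i ∈ Rc c, (if t i ∈ B then ex c i else 0) := by
    rw [hu, hu', ← Finset.sum_sub_distrib, Finset.sum_div, ← Finset.sum_add_distrib]
    refine Finset.sum_congr rfl ?_
    intro i _
    by_cases hB : t i ∈ B
    · by_cases h1 : sz c i = 1
      · simp [hB, h1, ex]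
      · simp only [hB, h1, and_false, if_false, if_true, true_and, and_true, ex, if_neg h1]
        ring
    · simp [hB]
  rw [hexp, Real.rpow_sum_of_pos hN0]
  refine Finset.prod_congr rfl ?_
  intro i _
  by_cases hB : t i ∈ B
  · simp [FF, hB]
  · simp [FF, hB, Real.rpow_zero]

end weight

section classbound

variable {p d : ℕ}

lemma class_bound (q b N : ℕ) (hN : 1 ≤ N) (α : ℝ) (hα : 0 < α) (hd : (d : ℝ) = α * N)
    (B : Finset (Fin d)) (hB : B.card ≤ b) (c : Fin p → Fin p) :
    ∑ t ∈ (tupleAq p d q).filter (fun t => rp t = c),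
        (N : ℝ) ^ (uCount' B t) *
          (N : ℝ) ^ ((((uCount B t : ℝ) - (uCount' B t : ℝ))) / 2)
      ≤ (α + (b : ℝ) + 1) ^ p * (N : ℝ) ^ (((p : ℝ) + (q : ℝ)) / 2) := by
  have hN1 : (1 : ℝ) ≤ (N : ℝ) := by exact_mod_cast hN
  have hN0 : (0 : ℝ) < (N : ℝ) := by linarith
  have hab1 : (1 : ℝ) ≤ α + (b : ℝ) + 1 := by
    have hb0 : (0 : ℝ) ≤ (b : ℝ) := Nat.cast_nonneg b
    linarith
  rcases Finset.eq_empty_or_nonempty ((tupleAq p d q).filter (fun t => rp t = c)) with he | hne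
  · rw [he, Finset.sum_empty]
    positivity
  obtain ⟨t₀, ht₀⟩ := hne
  set s := (tupleAq p d q).filter (fun t => rp t = c) with hs
  have hmem : ∀ t ∈ s, rp t = c := fun t htm => (Finset.mem_filter.1 htm).2
  have hA : (uniqueVals t₀).card = q := by
    have := (Finset.mem_filter.1 ht₀).1
    simpa [tupleAq] using this
  have ht0c : rp t₀ = c := hmem t₀ ht₀
  have hcid : ∀ i, c (c i) = c i := fun i => c_idem ht0c i
  have step1 : ∑ t ∈ s, (N : ℝ) ^ (uCount' B t) *
        (N : ℝ) ^ ((((uCount B t : ℝ) - (uCount' B t : ℝ))) / 2)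
      = ∑ t ∈ s, ∏ i ∈ Rc c, FF N B c i (t i) :=
    Finset.sum_congr rfl fun t htm => weight_eq (hmem t htm) hN B
  rw [step1]
  have hinj : ∀ t1 ∈ s, ∀ t2 ∈ s,
      (fun x : ↥(Rc c) => t1 x.1) = (fun x : ↥(Rc c) => t2 x.1) → t1 = t2 := by
    intro t1 h1 t2 h2 h12
    funext j
    have hcj : c j ∈ Rc c := by simp [Rc, hcid j]
    have e1 : t1 (c j) = t1 j := by rw [← hmem t1 h1]; exact t_rp t1 j
    have e2 : t2 (c j) = t2 j := by rw [← hmem t2 h2]; exact t_rp t2 j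
    have := congrFun h12 ⟨c j, hcj⟩
    simp only at this
    rw [← e1, ← e2, this]
  have step2 : ∑ t ∈ s, ∏ i ∈ Rc c, FF N B c i (t i)
      = ∑ h ∈ s.image (fun t (x : ↥(Rc c)) => t x.1),
          ∏ x : ↥(Rc c), FF N B c x.1 (h x) := by
    rw [Finset.sum_image hinj]
    refine Finset.sum_congr rfl ?_
    intro t htm
    exact (Finset.prod_coe_sort (Rc c) (fun i => FF N B c i (t i))).symm
  rw [step2]
  have step3 : ∑ h ∈ s.image (fun t (x : ↥(Rc c)) => t x.1),
        ∏ x : ↥(Rc c), FF N B c x.1 (h x)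
      ≤ ∑ h : ↥(Rc c) → Fin d, ∏ x : ↥(Rc c), FF N B c x.1 (h x) :=
    Finset.sum_le_sum_of_subset_of_nonneg (Finset.subset_univ _)
      (fun h _ _ => Finset.prod_nonneg fun x _ => FF_nonneg N B c x.1 (h x))
  have step4 : ∑ h : ↥(Rc c) → Fin d, ∏ x : ↥(Rc c), FF N B c x.1 (h x)
      = ∏ x : ↥(Rc c), ∑ v : Fin d, FF N B c x.1 v :=
    (Fintype.prod_sum (fun (x : ↥(Rc c)) (v : Fin d) => FF N B c x.1 v)).symm
  have hA1 : ∀ i : Fin p, (1 : ℝ) ≤ (N : ℝ) ^ (ex c i) := by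
    intro i
    have h := Real.rpow_le_rpow_of_exponent_le hN1 (one_le_ex c i)
    rw [Real.rpow_one] at h
    exact le_trans hN1 h
  have step5 : ∀ x : ↥(Rc c), ∑ v : Fin d, FF N B c x.1 v
      ≤ (α + (b : ℝ) + 1) * (N : ℝ) ^ (ex c x.1) := by
    intro x
    have hApos : (0 : ℝ) ≤ (N : ℝ) ^ (ex c x.1) := le_trans zero_le_one (hA1 x.1)
    have hsum : ∑ v : Fin d, FF N B c x.1 v
        = (B.card : ℝ) * (N : ℝ) ^ (ex c x.1) + ((Finset.univ.filter
            (fun v : Fin d => v ∉ B)).card : ℝ) := by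
      rw [show (fun v : Fin d => FF N B c x.1 v)
          = (fun v : Fin d => if v ∈ B then (N : ℝ) ^ (ex c x.1) else 1) from rfl]
      rw [Finset.sum_ite, Finset.sum_const, Finset.sum_const]
      have : Finset.univ.filter (fun v : Fin d => v ∈ B) = B := by
        ext v; simp
      rw [this]
      simp [nsmul_eq_mul]
    rw [hsum]
    have h1 : ((Finset.univ.filter (fun v : Fin d => v ∉ B)).card : ℝ) ≤ (d : ℝ) := by
      have := Finset.card_filter_le (Finset.univ : Finset (Fin d))
        (fun v : Fin d => v ∉ B)
      have h2 : (Finset.univ : Finset (Fin d)).card = d := by simp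
      exact_mod_cast h2 ▸ this
    have h2 : (d : ℝ) ≤ α * (N : ℝ) ^ (ex c x.1) := by
      rw [hd]
      have := hA1 x.1
      have hNle : (N : ℝ) ≤ (N : ℝ) ^ (ex c x.1) := by
        have := Real.rpow_le_rpow_of_exponent_le hN1 (one_le_ex c x.1)
        rwa [Real.rpow_one] at this
      nlinarith
    have h3 : (B.card : ℝ) ≤ (b : ℝ) := by exact_mod_cast hB
    nlinarith
  have step6 : ∏ x : ↥(Rc c), ∑ v : Fin d, FF N B c x.1 v
      ≤ ∏ x : ↥(Rc c), (α + (b : ℝ) + 1) * (N : ℝ) ^ (ex c x.1) := by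
    refine Finset.prod_le_prod ?_ ?_
    · intro x _
      refine Finset.sum_nonneg fun v _ => FF_nonneg N B c x.1 v
    · intro x _
      exact step5 x
  have step7 : ∏ x : ↥(Rc c), (α + (b : ℝ) + 1) * (N : ℝ) ^ (ex c x.1)
      = (α + (b : ℝ) + 1) ^ (Rc c).card * (N : ℝ) ^ (((p : ℝ) + (q : ℝ)) / 2) := by
    rw [Finset.prod_mul_distrib, Finset.prod_const]
    congr 1
    · congr 1
      simp [Finset.card_univ]
    · rw [Finset.prod_coe_sort (Rc c) (fun i => (N : ℝ) ^ (ex c i)),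
        ← Real.rpow_sum_of_pos hN0, sum_ex ht0c hA]
  have step8 : (α + (b : ℝ) + 1) ^ (Rc c).card ≤ (α + (b : ℝ) + 1) ^ p := by
    refine pow_le_pow_right₀ hab1 ?_
    have := Finset.card_filter_le (Finset.univ : Finset (Fin p)) (fun i => c i = i)
    simpa [Rc] using this
  have hNP : (0 : ℝ) ≤ (N : ℝ) ^ (((p : ℝ) + (q : ℝ)) / 2) := by positivity
  calc ∑ h ∈ s.image (fun t (x : ↥(Rc c)) => t x.1), ∏ x : ↥(Rc c), FF N B c x.1 (h x)
      ≤ ∑ h : ↥(Rc c) → Fin d, ∏ x : ↥(Rc c), FF N B c x.1 (h x) := step3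
    _ = ∏ x : ↥(Rc c), ∑ v : Fin d, FF N B c x.1 v := step4
    _ ≤ ∏ x : ↥(Rc c), (α + (b : ℝ) + 1) * (N : ℝ) ^ (ex c x.1) := step6
    _ = (α + (b : ℝ) + 1) ^ (Rc c).card * (N : ℝ) ^ (((p : ℝ) + (q : ℝ)) / 2) := step7
    _ ≤ (α + (b : ℝ) + 1) ^ p * (N : ℝ) ^ (((p : ℝ) + (q : ℝ)) / 2) := by
        exact mul_le_mul_of_nonneg_right step8 hNP

end classbound

lemma upper_bound (p d q b N : ℕ) (hN : 1 ≤ N) (α : ℝ) (hα : 0 < α) (hd : (d : ℝ) = α * N)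
    (B : Finset (Fin d)) (hB : B.card ≤ b) :
    ∑ t ∈ tupleAq p d q,
        (N : ℝ) ^ (uCount' B t) *
          (N : ℝ) ^ ((((uCount B t : ℝ) - (uCount' B t : ℝ))) / 2)
      ≤ ((p : ℝ) ^ p * (α + (b : ℝ) + 1) ^ p) * (N : ℝ) ^ (((p : ℝ) + (q : ℝ)) / 2) := by
  rw [← Finset.sum_fiberwise (tupleAq p d q) (fun t => rp t)
    (fun t => (N : ℝ) ^ (uCount' B t) *
      (N : ℝ) ^ ((((uCount B t : ℝ) - (uCount' B t : ℝ))) / 2))]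
  calc ∑ c : Fin p → Fin p, ∑ t ∈ (tupleAq p d q).filter (fun t => rp t = c),
          (N : ℝ) ^ (uCount' B t) *
            (N : ℝ) ^ ((((uCount B t : ℝ) - (uCount' B t : ℝ))) / 2)
      ≤ ∑ _c : Fin p → Fin p,
          (α + (b : ℝ) + 1) ^ p * (N : ℝ) ^ (((p : ℝ) + (q : ℝ)) / 2) := by
        refine Finset.sum_le_sum ?_
        intro c _
        exact class_bound q b N hN α hα hd B hB c
    _ = ((p : ℝ) ^ p * (α + (b : ℝ) + 1) ^ p) * (N : ℝ) ^ (((p : ℝ) + (q : ℝ)) / 2) := by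
        rw [Finset.sum_const, Finset.card_univ]
        have hcard : Fintype.card (Fin p → Fin p) = p ^ p := by
          simp [Fintype.card_fun]
        rw [hcard, nsmul_eq_mul]
        push_cast
        ring

section lower

/-- The base pattern map: `q` singletons followed by `(p-q)/2` pairs. -/
def mm (p q k : ℕ) (hk : q ≤ k) (hkp : k ≤ p) (h2k : 2 * k = p + q) : Fin p → Fin k :=
  fun i => if h : i.1 < q then ⟨i.1, lt_of_lt_of_le h hk⟩
    else ⟨q + (i.1 - q) / 2, by have hip := i.2; omega⟩

lemma mm_val_low {p q k : ℕ} (hk : q ≤ k) (hkp : k ≤ p) (h2k : 2 * k = p + q)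
    (i : Fin p) (h : i.1 < q) : (mm p q k hk hkp h2k i).1 = i.1 := by
  rw [mm, dif_pos h]

lemma mm_val_high {p q k : ℕ} (hk : q ≤ k) (hkp : k ≤ p) (h2k : 2 * k = p + q)
    (i : Fin p) (h : ¬ i.1 < q) : (mm p q k hk hkp h2k i).1 = q + (i.1 - q) / 2 := by
  rw [mm, dif_neg h]

lemma mm_eq_low {p q k : ℕ} (hk : q ≤ k) (hkp : k ≤ p) (h2k : 2 * k = p + q)
    {j : Fin k} (hj : j.1 < q) (i : Fin p) :
    mm p q k hk hkp h2k i = j ↔ i.1 = j.1 := by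
  rw [Fin.ext_iff]
  by_cases h : i.1 < q
  · rw [mm_val_low hk hkp h2k i h]
  · rw [mm_val_high hk hkp h2k i h]
    omega

lemma mm_surj {p q k : ℕ} (hk : q ≤ k) (hkp : k ≤ p) (h2k : 2 * k = p + q) :
    Function.Surjective (mm p q k hk hkp h2k) := by
  intro j
  by_cases hj : j.1 < q
  · exact ⟨⟨j.1, lt_of_lt_of_le hj (le_trans hk hkp)⟩,
      (mm_eq_low hk hkp h2k hj _).2 rfl⟩
  · have hjk := j.2
    refine ⟨⟨q + 2 * (j.1 - q), by omega⟩, ?_⟩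
    have hval : ((⟨q + 2 * (j.1 - q), by omega⟩ : Fin p)).1 = q + 2 * (j.1 - q) := rfl
    have hcond : ¬ ((⟨q + 2 * (j.1 - q), by omega⟩ : Fin p)).1 < q := by omega
    rw [Fin.ext_iff, mm_val_high hk hkp h2k _ hcond, hval]
    omega

lemma mm_two {p q k : ℕ} (hk : q ≤ k) (hkp : k ≤ p) (h2k : 2 * k = p + q)
    {j : Fin k} (hj : ¬ j.1 < q) :
    ∃ i1 i2 : Fin p, i1 ≠ i2 ∧ mm p q k hk hkp h2k i1 = j ∧ mm p q k hk hkp h2k i2 = j := by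
  have hjk := j.2
  refine ⟨⟨q + 2 * (j.1 - q), by omega⟩, ⟨q + 2 * (j.1 - q) + 1, by omega⟩, ?_, ?_, ?_⟩
  · intro h
    rw [Fin.ext_iff] at h
    have h1 : ((⟨q + 2 * (j.1 - q), by omega⟩ : Fin p)).1 = q + 2 * (j.1 - q) := rfl
    have h2 : ((⟨q + 2 * (j.1 - q) + 1, by omega⟩ : Fin p)).1 = q + 2 * (j.1 - q) + 1 := rfl
    omega
  · have hval : ((⟨q + 2 * (j.1 - q), by omega⟩ : Fin p)).1 = q + 2 * (j.1 - q) := rfl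
    have hcond : ¬ ((⟨q + 2 * (j.1 - q), by omega⟩ : Fin p)).1 < q := by omega
    rw [Fin.ext_iff, mm_val_high hk hkp h2k _ hcond, hval]
    omega
  · have hval : ((⟨q + 2 * (j.1 - q) + 1, by omega⟩ : Fin p)).1 = q + 2 * (j.1 - q) + 1 := rfl
    have hcond : ¬ ((⟨q + 2 * (j.1 - q) + 1, by omega⟩ : Fin p)).1 < q := by omega
    rw [Fin.ext_iff, mm_val_high hk hkp h2k _ hcond, hval]
    omega

lemma lower_bound (p d q : ℕ) (hp : 1 ≤ p) (hq : q ≤ p) (hpq : Even (p - q))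
    (hdp : 2 * p < d) :
    (d - p) ^ (q + (p - q) / 2) ≤ (tupleAq p d q).card := by
  have hev : 2 * ((p - q) / 2) = p - q := by
    obtain ⟨r, hr⟩ := hpq
    omega
  set k := q + (p - q) / 2 with hkdef
  have h2k : 2 * k = p + q := by omega
  have hk : q ≤ k := Nat.le_add_right _ _
  have hkp : k ≤ p := by omega
  set m := mm p q k hk hkp h2k with hm
  have hsub : ((Finset.univ : Finset (Fin k ↪ Fin d)).image
      (fun g : Fin k ↪ Fin d => ⇑g ∘ m)) ⊆ tupleAq p d q := by
    intro t htm
    obtain ⟨g, -, rfl⟩ := Finset.mem_image.1 htm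
    simp only [tupleAq, Finset.mem_filter, Finset.mem_univ, true_and]
    have huv : uniqueVals (⇑g ∘ m)
        = (Finset.univ.filter (fun j : Fin k => j.1 < q)).image ⇑g := by
      ext v
      simp only [uniqueVals, Finset.mem_filter, Finset.mem_univ, true_and,
        Finset.mem_image, Function.comp_apply]
      constructor
      · intro hc
        obtain ⟨a, ha⟩ := Finset.card_eq_one.1 hc
        have hav : a ∈ Finset.univ.filter (fun i => g (m i) = v) :=
          ha ▸ Finset.mem_singleton_self a
        have hgav : g (m a) = v := by simpa using hav
        by_cases hj : (m a).1 < q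
        · exact ⟨m a, hj, hgav⟩
        · exfalso
          obtain ⟨i1, i2, hne, h1, h2⟩ := mm_two hk hkp h2k hj
          have hi1 : i1 ∈ Finset.univ.filter (fun i => g (m i) = v) := by
            simp only [Finset.mem_filter, Finset.mem_univ, true_and, hm]
            rw [h1, ← hgav]
          have hi2 : i2 ∈ Finset.univ.filter (fun i => g (m i) = v) := by
            simp only [Finset.mem_filter, Finset.mem_univ, true_and, hm]
            rw [h2, ← hgav]
          rw [ha, Finset.mem_singleton] at hi1 hi2
          exact hne (hi1.trans hi2.symm)
      · rintro ⟨j, hj, rfl⟩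
        have hfil : Finset.univ.filter (fun i => g (m i) = g j)
            = {(⟨j.1, lt_of_lt_of_le hj (le_trans hk hkp)⟩ : Fin p)} := by
          ext i
          simp only [Finset.mem_filter, Finset.mem_univ, true_and, Finset.mem_singleton]
          rw [g.injective.eq_iff, hm, mm_eq_low hk hkp h2k hj i, Fin.ext_iff]
        rw [hfil]
        simp
    rw [huv, Finset.card_image_of_injective _ g.injective]
    have hfq : (Finset.univ.filter (fun j : Fin k => j.1 < q))
        = (Finset.univ : Finset (Fin q)).image (Fin.castLE hk) := by
      ext j
      simp only [Finset.mem_filter, Finset.mem_univ, true_and, Finset.mem_image]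
      constructor
      · intro hj
        exact ⟨⟨j.1, hj⟩, Fin.ext rfl⟩
      · rintro ⟨x, -, rfl⟩
        exact x.2
    rw [hfq, Finset.card_image_of_injective _ (Fin.castLE_injective hk)]
    simp
  have hinj : Set.InjOn (fun g : Fin k ↪ Fin d => ⇑g ∘ m)
      ((Finset.univ : Finset (Fin k ↪ Fin d)) : Set (Fin k ↪ Fin d)) := by
    intro g1 _ g2 _ h
    refine DFunLike.ext _ _ ?_
    intro j
    obtain ⟨i, rfl⟩ := mm_surj hk hkp h2k j
    exact congrFun h i
  have hcard : ((Finset.univ : Finset (Fin k ↪ Fin d)).image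
      (fun g : Fin k ↪ Fin d => ⇑g ∘ m)).card = d.descFactorial k := by
    rw [Finset.card_image_of_injOn hinj, Finset.card_univ, Fintype.card_embedding_eq]
    simp
  have hdesc : (d - p) ^ k ≤ d.descFactorial k := by
    rw [Nat.descFactorial_eq_prod_range]
    calc (d - p) ^ k = ∏ _i ∈ Finset.range k, (d - p) := by
          rw [Finset.prod_const, Finset.card_range]
      _ ≤ ∏ i ∈ Finset.range k, (d - i) := by
          refine Finset.prod_le_prod' ?_
          intro i hi
          have : i ≤ p := le_trans (le_of_lt (Finset.mem_range.1 hi)) hkp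
          omega
  calc (d - p) ^ k ≤ d.descFactorial k := hdesc
    _ = ((Finset.univ : Finset (Fin k ↪ Fin d)).image
        (fun g : Fin k ↪ Fin d => ⇑g ∘ m)).card := hcard.symm
    _ ≤ (tupleAq p d q).card := Finset.card_le_card hsub

end lower

end Stmt11Aux

open Stmt11Aux in
/-- fix `p ≥ 1`, `q ≤ p` with `p − q` even, an aspect ratio `α > 0` and a
bound `b` on the size of the fixed set `B`.  For a uniformly random tuple from `A_q`,
`E[N^{u'} · N^{(u−u')/2}] ≤ C` with `C` independent of `N` when `d = αN`.  (The
expectation is written as `Σ ≤ C · |A_q|`.) -/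
theorem stmt11 (p q b : ℕ) (hp : 1 ≤ p) (hq : q ≤ p) (hpq : Even (p - q))
    (α : ℝ) (hα : 0 < α) :
    ∃ C : ℝ, 0 < C ∧ ∀ (N d : ℕ), 1 ≤ N → (d : ℝ) = α * N →
      ∀ B : Finset (Fin d), B.card ≤ b →
        (∑ t ∈ tupleAq p d q,
            (N : ℝ) ^ (uCount' B t) *
              (N : ℝ) ^ ((((uCount B t : ℝ) - (uCount' B t : ℝ))) / 2))
          ≤ C * ((tupleAq p d q).card : ℝ) := by
  classical
  set K1 : ℝ := (p : ℝ) ^ p * (α + (b : ℝ) + 1) ^ p with hK1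
  set K2 : ℝ := (2 * (p : ℝ) / α + 1) ^ (2 * p) with hK2
  set K3 : ℝ := (2 / α + 1) ^ p with hK3
  have hK1pos : 0 < K1 := by
    rw [hK1]
    have h1 : (0 : ℝ) < (p : ℝ) := by exact_mod_cast hp
    positivity
  have hK2pos : 0 < K2 := by rw [hK2]; positivity
  have hK3pos : 0 < K3 := by rw [hK3]; positivity
  refine ⟨K1 * K3 + K2, by positivity, ?_⟩
  intro N d hN hd B hB
  have hN1 : (1 : ℝ) ≤ (N : ℝ) := by exact_mod_cast hN
  have hN0 : (0 : ℝ) < (N : ℝ) := by linarith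
  have hcard0 : (0 : ℝ) ≤ ((tupleAq p d q).card : ℝ) := Nat.cast_nonneg _
  by_cases hcase : d ≤ 2 * p
  · -- small N : bound each term
    have hterm : ∀ t ∈ tupleAq p d q,
        (N : ℝ) ^ (uCount' B t) *
          (N : ℝ) ^ ((((uCount B t : ℝ) - (uCount' B t : ℝ))) / 2) ≤ K2 := by
      intro t _
      have hu'p : uCount' B t ≤ p := by
        have := Finset.card_filter_le (Finset.univ : Finset (Fin p))
          (fun i => t i ∈ B ∧ t i ∈ uniqueVals t)
        simpa [uCount'] using this
      have hup : uCount B t ≤ p := by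
        have := Finset.card_filter_le (Finset.univ : Finset (Fin p)) (fun i => t i ∈ B)
        simpa [uCount] using this
      have h1 : (N : ℝ) ^ (uCount' B t) ≤ (N : ℝ) ^ p := pow_le_pow_right₀ hN1 hu'p
      have h2 : (N : ℝ) ^ ((((uCount B t : ℝ) - (uCount' B t : ℝ))) / 2)
          ≤ (N : ℝ) ^ ((p : ℝ)) := by
        refine Real.rpow_le_rpow_of_exponent_le hN1 ?_
        have ha : (uCount B t : ℝ) ≤ (p : ℝ) := by exact_mod_cast hup
        have hb2 : (0 : ℝ) ≤ (uCount' B t : ℝ) := Nat.cast_nonneg _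
        have hp1 : (1 : ℝ) ≤ (p : ℝ) := by exact_mod_cast hp
        linarith
      have h3 : (0 : ℝ) ≤ (N : ℝ) ^ (uCount' B t) := by positivity
      have h4 : (0 : ℝ) ≤ (N : ℝ) ^ ((((uCount B t : ℝ) - (uCount' B t : ℝ))) / 2) := by
        positivity
      calc (N : ℝ) ^ (uCount' B t) *
            (N : ℝ) ^ ((((uCount B t : ℝ) - (uCount' B t : ℝ))) / 2)
          ≤ (N : ℝ) ^ p * (N : ℝ) ^ ((p : ℝ)) := by
            exact mul_le_mul h1 h2 h4 (by positivity)
        _ = (N : ℝ) ^ (2 * p) := by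
            rw [Real.rpow_natCast, ← pow_add]
            congr 1
            omega
        _ ≤ K2 := by
            rw [hK2]
            refine pow_le_pow_left₀ (le_of_lt hN0) ?_ _
            have hdN : α * (N : ℝ) ≤ 2 * (p : ℝ) := by
              rw [← hd]; exact_mod_cast hcase
            have : (N : ℝ) ≤ 2 * (p : ℝ) / α := by
              rw [le_div_iff₀ hα]
              linarith [mul_comm α (N : ℝ)]
            linarith
    have hsum := Finset.sum_le_card_nsmul (tupleAq p d q) _ K2 hterm
    rw [nsmul_eq_mul] at hsum
    calc (∑ t ∈ tupleAq p d q,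
          (N : ℝ) ^ (uCount' B t) *
            (N : ℝ) ^ ((((uCount B t : ℝ) - (uCount' B t : ℝ))) / 2))
        ≤ ((tupleAq p d q).card : ℝ) * K2 := hsum
      _ ≤ (K1 * K3 + K2) * ((tupleAq p d q).card : ℝ) := by
          rw [mul_comm]
          refine mul_le_mul_of_nonneg_right ?_ hcard0
          nlinarith
  · -- large N
    push_neg at hcase
    have hev : 2 * ((p - q) / 2) = p - q := by
      obtain ⟨r, hr⟩ := hpq
      omega
    set k := q + (p - q) / 2 with hkdef
    have h2k : 2 * k = p + q := by omega
    have hkp : k ≤ p := by omega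
    have hupper := upper_bound p d q b N hN α hα hd B hB
    have hlower := lower_bound p d q hp hq hpq hcase
    -- rewrite the rpow exponent as k
    have hexp : (N : ℝ) ^ (((p : ℝ) + (q : ℝ)) / 2) = (N : ℝ) ^ k := by
      rw [← Real.rpow_natCast (N : ℝ) k]
      congr 1
      have : ((2 * k : ℕ) : ℝ) = ((p + q : ℕ) : ℝ) := by rw [h2k]
      push_cast at this
      linarith
    rw [hexp] at hupper
    -- lower bound in ℝ
    have hpd : p ≤ d := by omega
    have hcastsub : (((d - p : ℕ)) : ℝ) = (d : ℝ) - (p : ℝ) := Nat.cast_sub hpd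
    have hlowR : ((d : ℝ) - (p : ℝ)) ^ k ≤ ((tupleAq p d q).card : ℝ) := by
      rw [← hcastsub]
      exact_mod_cast hlower
    have hhalf : α * (N : ℝ) / 2 ≤ (d : ℝ) - (p : ℝ)  := by
      have h2p : 2 * (p : ℝ) < (d : ℝ) := by exact_mod_cast hcase
      rw [hd] at h2p ⊢
      linarith
    have hhalfpos : 0 < α * (N : ℝ) / 2 := by positivity
    have hE : (α * (N : ℝ) / 2) ^ k ≤ ((tupleAq p d q).card : ℝ) :=
      le_trans (pow_le_pow_left₀ (le_of_lt hhalfpos) hhalf k) hlowR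
    -- N^k = (2/α)^k * (α N/2)^k
    have hNk : (N : ℝ) ^ k = (2 / α) ^ k * (α * (N : ℝ) / 2) ^ k := by
      rw [← mul_pow]
      congr 1
      field_simp
    have h2a : (2 / α) ^ k ≤ K3 := by
      rw [hK3]
      calc (2 / α) ^ k ≤ (2 / α + 1) ^ k := by
            refine pow_le_pow_left₀ (by positivity) (by linarith) k
        _ ≤ (2 / α + 1) ^ p := by
            refine pow_le_pow_right₀ (by nlinarith [div_pos (by norm_num : (0:ℝ) < 2) hα]) hkp
    calc (∑ t ∈ tupleAq p d q,
          (N : ℝ) ^ (uCount' B t) *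
            (N : ℝ) ^ ((((uCount B t : ℝ) - (uCount' B t : ℝ))) / 2))
        ≤ K1 * (N : ℝ) ^ k := hupper
      _ = K1 * ((2 / α) ^ k * (α * (N : ℝ) / 2) ^ k) := by rw [hNk]
      _ ≤ K1 * (K3 * ((tupleAq p d q).card : ℝ)) := by
          refine mul_le_mul_of_nonneg_left ?_ (le_of_lt hK1pos)
          refine mul_le_mul h2a hE (by positivity) (le_of_lt hK3pos)
      _ = (K1 * K3) * ((tupleAq p d q).card : ℝ) := by ring
      _ ≤ (K1 * K3 + K2) * ((tupleAq p d q).card : ℝ) := by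
          refine mul_le_mul_of_nonneg_right ?_ hcard0
          linarith
end
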